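/- Greedy selection lemma (Claim 8.1, abstract form): Let 𝒫 = {B₁,…,B_N} be a finite set and 𝕋 a finite set, with an incidence relation such that each B ∈ 𝒫 is incident to exactly D elements of 𝕋 (D = #𝒟), and #𝕋 ≤ C · D · N / log R with each element of 𝕋 incident to at most (log R) elements of 𝒫. Then there exists a subset 𝒫¹ ⊆ 𝒫 with #𝒫¹ ≥ c (log R)^{-2} N, ordered as B_{k_1}, …, B_{k_m}, such that for each j, at least D/2 of the elements of 𝕋 incident to B_{k_j} are not incident to any earlier B_{k_i} (i < j). -/

import Mathlib

open Finset

section Aux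

variable {P T : Type} [Fintype P] [Fintype T] (Inc : P → T → Prop)
  [∀ p t, Decidable (Inc p t)] (D : ℕ)

/-- The tubes through `b` not incident to anything in `L`. -/
def newT (b : P) (L : List P) : Finset T :=
  univ.filter fun t => Inc b t ∧ ∀ a ∈ L, ¬ Inc a t

/-- A good greedy selection list (head = most recently selected). -/
def GoodL : List P → Prop
  | [] => True
  | b :: L => GoodL L ∧ b ∉ L ∧ (D : ℝ) / 2 ≤ ((newT Inc b L).card : ℝ)

lemma goodL_nodup : ∀ L : List P, GoodL Inc D L → L.Nodup := by
  intro L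
  induction L with
  | nil => intro _; exact List.nodup_nil
  | cons b L ih =>
    intro h
    simp only [GoodL] at h
    exact List.nodup_cons.2 ⟨h.2.1, ih h.1⟩

lemma exists_maximal :
    ∃ L : List P, GoodL Inc D L ∧
      ∀ b : P, b ∉ L → ((newT Inc b L).card : ℝ) < (D : ℝ) / 2 := by
  suffices h : ∀ n : ℕ, ∀ L : List P, GoodL Inc D L → Fintype.card P ≤ n + L.length →
      ∃ L' : List P, GoodL Inc D L' ∧
        ∀ b : P, b ∉ L' → ((newT Inc b L').card : ℝ) < (D : ℝ) / 2 by
    exact h (Fintype.card P) [] trivial (by simp)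
  intro n
  induction n with
  | zero =>
    intro L hL hcard
    refine ⟨L, hL, fun b hb => absurd ?_ hb⟩
    have hnd := goodL_nodup Inc D L hL
    by_contra hbL
    have hnd' : (b :: L).Nodup := List.nodup_cons.2 ⟨hbL, hnd⟩
    have := hnd'.length_le_card
    simp only [List.length_cons] at this
    omega
  | succ n ih =>
    intro L hL hcard
    by_cases hex : ∃ b : P, b ∉ L ∧ (D : ℝ) / 2 ≤ ((newT Inc b L).card : ℝ)
    · obtain ⟨b, hb, hnew⟩ := hex
      refine ih (b :: L) ⟨hL, hb, hnew⟩ ?_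
      simp only [List.length_cons]
      omega
    · push_neg at hex
      exact ⟨L, hL, hex⟩

lemma goodL_index : ∀ L : List P, GoodL Inc D L → ∀ (j : ℕ) (hj : j < L.reverse.length),
    (D : ℝ) / 2 ≤ ((univ.filter fun t => Inc (L.reverse[j]) t ∧
      ∀ (i : ℕ) (hi : i < L.reverse.length), i < j → ¬ Inc (L.reverse[i]) t).card : ℝ) := by
  intro L
  induction L with
  | nil => intro _ j hj; simp at hj
  | cons b L ih =>
    intro hL j hj
    simp only [GoodL] at hL
    obtain ⟨hL', hbL, hnew⟩ := hL
    have hrev : (b :: L).reverse = L.reverse ++ [b] := List.reverse_cons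
    have hlen : (b :: L).reverse.length = L.reverse.length + 1 := by simp
    rcases lt_or_eq_of_le (Nat.lt_succ_iff.1 (hlen ▸ hj)) with hjlt | hjeq
    · -- j < L.reverse.length : reduce to ih
      have hset : (univ.filter fun t => Inc ((b :: L).reverse[j]'hj) t ∧
          ∀ (i : ℕ) (hi : i < (b :: L).reverse.length), i < j →
            ¬ Inc ((b :: L).reverse[i]'hi) t) =
          (univ.filter fun t => Inc (L.reverse[j]'hjlt) t ∧
          ∀ (i : ℕ) (hi : i < L.reverse.length), i < j → ¬ Inc (L.reverse[i]'hi) t) := by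
        apply Finset.filter_congr
        intro t _
        have hgj : (b :: L).reverse[j]'hj = L.reverse[j]'hjlt :=
          (List.getElem_of_eq hrev hj).trans (List.getElem_append_left hjlt)
        have hgi : ∀ (i : ℕ) (hi1 : i < (b :: L).reverse.length) (hi2 : i < L.reverse.length),
            (b :: L).reverse[i]'hi1 = L.reverse[i]'hi2 := fun i hi1 hi2 =>
          (List.getElem_of_eq hrev hi1).trans (List.getElem_append_left hi2)
        constructor
        · rintro ⟨h1, h2⟩
          refine ⟨hgj ▸ h1, fun i hi hij => ?_⟩
          have := h2 i (by omega) hij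
          rwa [hgi i (by omega) hi] at this
        · rintro ⟨h1, h2⟩
          refine ⟨hgj ▸ h1, fun i hi hij => ?_⟩
          have hi' : i < L.reverse.length := by omega
          have := h2 i hi' hij
          rwa [← hgi i hi hi'] at this
      rw [hset]
      exact ih hL' j hjlt
    · -- j = L.reverse.length : the head element b
      have hset : (univ.filter fun t => Inc ((b :: L).reverse[j]'hj) t ∧
          ∀ (i : ℕ) (hi : i < (b :: L).reverse.length), i < j →
            ¬ Inc ((b :: L).reverse[i]'hi) t) = newT Inc b L := by
        apply Finset.filter_congr
        intro t _
        have hgj : (b :: L).reverse[j]'hj = b :=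
          (List.getElem_of_eq hrev hj).trans
            (List.getElem_concat_length hjeq _)
        have hgi : ∀ (i : ℕ) (hi2 : i < L.reverse.length),
            (b :: L).reverse[i]'(by omega) = L.reverse[i]'hi2 := fun i hi2 =>
          (List.getElem_of_eq hrev (by omega)).trans (List.getElem_append_left hi2)
        rw [hgj]
        constructor
        · rintro ⟨h1, h2⟩
          refine ⟨h1, fun a ha => ?_⟩
          rw [← List.mem_reverse] at ha
          obtain ⟨i, hi, hia⟩ := List.mem_iff_getElem.1 ha
          have := h2 i (by omega) (by omega)
          rwa [hgi i hi, hia] at this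
        · rintro ⟨h1, h2⟩
          refine ⟨h1, fun i hi hij => ?_⟩
          have hi' : i < L.reverse.length := by omega
          rw [hgi i hi']
          exact h2 _ (List.mem_reverse.1 (List.getElem_mem _))
      rw [hset]
      exact hnew

end Aux

/-- Greedy selection lemma (abstract form of Claim 8.1): if each of the `N` balls is
incident to exactly `D` tubes, each tube is incident to at most `log R` balls, and
`#𝕋 ≤ C·D·N/log R`, then one can select `≥ c (log R)^{-2} N` balls so that each selected
ball has at least `D/2` of its tubes not incident to any earlier selected ball. -/
theorem stmt_8 (C : ℝ) (hC : 0 < C) :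
    ∃ c : ℝ, 0 < c ∧
      ∀ (R : ℝ), 2 ≤ R →
      ∀ (P T : Type) (_ : Fintype P) (_ : Fintype T)
        (Inc : P → T → Prop) (_ : ∀ p t, Decidable (Inc p t))
        (N D : ℕ),
        Fintype.card P = N →
        (∀ B : P, (univ.filter fun t => Inc B t).card = D) →
        (∀ t : T, ((univ.filter fun B => Inc B t).card : ℝ) ≤ Real.log R) →
        ((Fintype.card T : ℝ) ≤ C * D * N / Real.log R) →
        ∃ (m : ℕ) (k : Fin m → P), Function.Injective k ∧
          c * (Real.log R) ^ (-2 : ℝ) * N ≤ m ∧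
          ∀ j : Fin m, (D : ℝ) / 2 ≤
            ((univ.filter fun t =>
              Inc (k j) t ∧ ∀ i : Fin m, i < j → ¬ Inc (k i) t).card : ℝ) := by
  refine ⟨Real.log 2 / 2, by positivity, ?_⟩
  intro R hR P T instP instT Inc instInc N D hN hD hT hTcard
  haveI : DecidableEq P := Classical.decEq P
  haveI : DecidableEq T := Classical.decEq T
  have hlog2 : (0 : ℝ) < Real.log 2 := Real.log_pos (by norm_num)
  have hlogR2 : Real.log 2 ≤ Real.log R := Real.log_le_log (by norm_num) hR
  have hlogR : (0 : ℝ) < Real.log R := lt_of_lt_of_le hlog2 hlogR2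
  obtain ⟨L, hLgood, hLmax⟩ := exists_maximal Inc D (P := P) (T := T)
  have hnodup := goodL_nodup Inc D L hLgood
  set m := L.length with hm
  have hmrev : L.reverse.length = m := by simp [hm]
  have hlog2half : Real.log 2 > 0.6931 := by
    have := Real.log_two_gt_d9
    linarith
  have hrp : Real.log R ^ (-2 : ℝ) = (Real.log R ^ 2)⁻¹ := by
    rw [show (-2 : ℝ) = -((2 : ℕ) : ℝ) by norm_num, Real.rpow_neg hlogR.le,
      Real.rpow_natCast]
  have hsize : Real.log 2 / 2 * Real.log R ^ (-2 : ℝ) * N ≤ m := by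
    rcases Nat.eq_zero_or_pos D with hD0 | hD1
    · -- D = 0 : greedy selects everything, m = N
      have hall : ∀ b : P, b ∈ L := by
        intro b
        by_contra hb
        have := hLmax b hb
        rw [hD0] at this
        have h0 : (0:ℝ) ≤ ((newT Inc b L).card : ℝ) := Nat.cast_nonneg _
        norm_num at this
        linarith
      have hmN : m = N := by
        have h1 : L.toFinset.card = m := List.toFinset_card_of_nodup hnodup
        have h2 : L.toFinset = univ := Finset.eq_univ_iff_forall.2 (by
          intro b; simpa using hall b)
        rw [h2, Finset.card_univ, hN] at h1
        omega
      rw [hmN, hrp]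
      have hb : (0:ℝ) < Real.log R ^ 2 := by positivity
      have h1 : Real.log 2 / 2 * (Real.log R ^ 2)⁻¹ ≤ 1 := by
        rw [show Real.log 2 / 2 * (Real.log R ^ 2)⁻¹
            = (Real.log 2 / 2) / (Real.log R ^ 2) by ring, div_le_one hb]
        nlinarith
      nlinarith [Nat.cast_nonneg (α := ℝ) N]
    · -- D ≥ 1 : counting argument
      set TS : Finset T := univ.filter fun t => ∃ a ∈ L, Inc a t with hTS
      -- per-ball: at least D/2 of each ball's tubes are in TS
      have hball : ∀ B : P, (D : ℝ) / 2 ≤ ((TS.filter fun t => Inc B t).card : ℝ) := by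
        intro B
        by_cases hB : B ∈ L
        · have hsub : (univ.filter fun t => Inc B t) ⊆ TS.filter fun t => Inc B t := by
            intro t ht
            simp only [mem_filter, mem_univ, true_and, hTS] at ht ⊢
            exact ⟨⟨B, hB, ht⟩, ht⟩
          have := Finset.card_le_card hsub
          rw [hD B] at this
          have hcast : (D : ℝ) ≤ ((TS.filter fun t => Inc B t).card : ℝ) := by
            exact_mod_cast this
          linarith [Nat.cast_nonneg (α := ℝ) D]
        · have hmax := hLmax B hB
          have hsub : (univ.filter fun t => Inc B t) ⊆
              newT Inc B L ∪ TS.filter fun t => Inc B t := by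
            intro t ht
            simp only [mem_filter, mem_univ, true_and] at ht
            by_cases h : ∀ a ∈ L, ¬ Inc a t
            · refine Finset.mem_union.2 (Or.inl ?_)
              simp only [newT, mem_filter, mem_univ, true_and]
              exact ⟨ht, h⟩
            · push_neg at h
              obtain ⟨a, ha, hat⟩ := h
              refine Finset.mem_union.2 (Or.inr ?_)
              simp only [hTS, mem_filter, mem_univ, true_and]
              exact ⟨⟨a, ha, hat⟩, ht⟩
          have hcard : D ≤ (newT Inc B L).card + (TS.filter fun t => Inc B t).card := by
            have h1 := Finset.card_le_card hsub
            rw [hD B] at h1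
            exact h1.trans (Finset.card_union_le _ _)
          have hcast : (D : ℝ) ≤ ((newT Inc B L).card : ℝ) +
              ((TS.filter fun t => Inc B t).card : ℝ) := by exact_mod_cast hcard
          linarith
      -- double counting
      have hdc : (∑ B : P, (TS.filter fun t => Inc B t).card) =
          ∑ t ∈ TS, (univ.filter fun B => Inc B t).card := by
        simp only [Finset.card_filter]
        exact Finset.sum_comm
      have hlhs : (N : ℝ) * ((D : ℝ) / 2) ≤
          ∑ B : P, ((TS.filter fun t => Inc B t).card : ℝ) := by
        have := Finset.sum_le_sum (fun B (_ : B ∈ univ) => hball B)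
        rw [Finset.sum_const, Finset.card_univ, hN, nsmul_eq_mul] at this
        exact this
      have hmid : (∑ B : P, ((TS.filter fun t => Inc B t).card : ℝ)) =
          ∑ t ∈ TS, ((univ.filter fun B => Inc B t).card : ℝ) := by
        rw [← Nat.cast_sum, ← Nat.cast_sum, hdc]
      have hrhs : (∑ t ∈ TS, ((univ.filter fun B => Inc B t).card : ℝ)) ≤
          (TS.card : ℝ) * Real.log R := by
        calc (∑ t ∈ TS, ((univ.filter fun B => Inc B t).card : ℝ))
            ≤ ∑ t ∈ TS, Real.log R := Finset.sum_le_sum fun t _ => hT t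
          _ = (TS.card : ℝ) * Real.log R := by rw [Finset.sum_const, nsmul_eq_mul]
      have hTScard : (TS.card : ℝ) ≤ (m : ℝ) * D := by
        have hsub : TS ⊆ L.toFinset.biUnion fun a => univ.filter fun t => Inc a t := by
          intro t ht
          simp only [hTS, mem_filter, mem_univ, true_and] at ht
          obtain ⟨a, ha, hat⟩ := ht
          exact Finset.mem_biUnion.2 ⟨a, List.mem_toFinset.2 ha, by
            simp only [mem_filter, mem_univ, true_and]; exact hat⟩
        have h1 : TS.card ≤ L.toFinset.card * D := by
          calc TS.card ≤ (L.toFinset.biUnion fun a => univ.filter fun t => Inc a t).card :=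
                Finset.card_le_card hsub
            _ ≤ ∑ a ∈ L.toFinset, (univ.filter fun t => Inc a t).card :=
                Finset.card_biUnion_le
            _ = L.toFinset.card * D := by
                rw [Finset.sum_congr rfl fun a _ => hD a, Finset.sum_const, smul_eq_mul]
        have h2 : L.toFinset.card = m := List.toFinset_card_of_nodup hnodup
        rw [h2] at h1
        exact_mod_cast h1
      have hmain : (N : ℝ) * ((D : ℝ) / 2) ≤ (m : ℝ) * D * Real.log R := by
        calc (N : ℝ) * ((D : ℝ) / 2) ≤ ∑ B : P, ((TS.filter fun t => Inc B t).card : ℝ) :=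
              hlhs
          _ = ∑ t ∈ TS, ((univ.filter fun B => Inc B t).card : ℝ) := hmid
          _ ≤ (TS.card : ℝ) * Real.log R := hrhs
          _ ≤ (m : ℝ) * D * Real.log R :=
              mul_le_mul_of_nonneg_right hTScard hlogR.le
      have hD1' : (1 : ℝ) ≤ (D : ℝ) := by exact_mod_cast hD1
      have hmN : (N : ℝ) ≤ 2 * m * Real.log R := by
        nlinarith [mul_nonneg (Nat.cast_nonneg (α := ℝ) m) hlogR.le]
      rw [hrp]
      have hb : (0:ℝ) < Real.log R ^ 2 := by positivity
      rw [show Real.log 2 / 2 * (Real.log R ^ 2)⁻¹ * (N:ℝ)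
          = (Real.log 2 / 2 * N) / (Real.log R ^ 2) by ring, div_le_iff₀ hb]
      nlinarith [mul_le_mul_of_nonneg_left hmN hlog2.le,
        mul_le_mul_of_nonneg_right hlogR2 (mul_nonneg (Nat.cast_nonneg (α := ℝ) m) hlogR.le)]
  refine ⟨m, fun j => L.reverse[(j : ℕ)]'(by rw [hmrev]; exact j.isLt), ?_, hsize, ?_⟩
  · intro i j hij
    have hnr : L.reverse.Nodup := List.nodup_reverse.2 hnodup
    have := (List.Nodup.getElem_inj_iff hnr).1 hij
    exact Fin.ext this
  · intro j
    have hj' : (j : ℕ) < L.reverse.length := by rw [hmrev]; exact j.isLt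
    have hidx := goodL_index Inc D L hLgood (j : ℕ) hj'
    have hset : (univ.filter fun t =>
        Inc (L.reverse[(j : ℕ)]'hj') t ∧ ∀ i : Fin m, i < j →
          ¬ Inc (L.reverse[(i : ℕ)]'(by rw [hmrev]; exact i.isLt)) t) =
        (univ.filter fun t => Inc (L.reverse[(j : ℕ)]'hj') t ∧
          ∀ (i : ℕ) (hi : i < L.reverse.length), i < (j : ℕ) →
            ¬ Inc (L.reverse[i]'hi) t) := by
      apply Finset.filter_congr
      intro t _
      constructor
      · rintro ⟨h1, h2⟩
        exact ⟨h1, fun i hi hij => h2 ⟨i, by omega⟩ hij⟩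
      · rintro ⟨h1, h2⟩
        exact ⟨h1, fun i hij => h2 (i : ℕ) (by rw [hmrev]; exact i.isLt) hij⟩
    rw [hset]
    exact hidx
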